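/- Let R = Mₙ(ℂ), let a ∈ R be positive semidefinite, let c ∈ R, let e ∈ R be an idempotent with eR = aR ∩ cR, and let f = eᴴ. Assume a ∉ eSf (there is no positive semidefinite s ∈ R with a = e*s*f). Let x ∈ R be an a-weighted Moore–Penrose inverse of f (f*x*f = f, x*f*x = x, (a*f*x)ᴴ = a*f*x and (a*x*f)ᴴ = a*x*f), and let C = {s ∈ eRf : s ≤⊕ a}. Then a*x*f ∈ C and for every s ∈ C one has s ≤⊕ a*x*f; in particular a*x*f is the unique maximal element of C with respect to ≤⊕. -/
import Mathlib


open Pointwise Matrix ComplexOrder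

/-- The right ideal `aR = {a*r : r ∈ R}`. -/
def rId {R : Type*} [Ring R] (a : R) : Set R := Set.range (fun r => a * r)

/-- The direct sum partial order: `a ≤⊕ b` iff `bR = aR ⊕ (b-a)R`. -/
def dsLE {R : Type*} [Ring R] (a b : R) : Prop :=
  rId a + rId (b - a) = rId b ∧ rId a ∩ rId (b - a) = {0}

/-- The set `eRf = {e*r*f : r ∈ R}`. -/
def midSet {R : Type*} [Ring R] (e f : R) : Set R := {x : R | ∃ r : R, x = e * r * f}

lemma mem_rId {R : Type*} [Ring R] {a y : R} : y ∈ rId a ↔ ∃ r, a * r = y :=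
  Iff.rfl

lemma self_mem_rId {R : Type*} [Ring R] (a : R) : a ∈ rId a := ⟨1, mul_one a⟩

lemma zero_mem_rId {R : Type*} [Ring R] (a : R) : (0 : R) ∈ rId a := ⟨0, mul_zero a⟩

lemma rId_subset {R : Type*} [Ring R] {a b : R} (t : R) (h : a = b * t) :
    rId a ⊆ rId b := by
  rintro y ⟨r, rfl⟩
  exact ⟨t * r, by show b * (t * r) = a * r; rw [← mul_assoc, ← h]⟩

lemma rId_sub_mem {R : Type*} [Ring R] {a u v : R} (hu : u ∈ rId a) (hv : v ∈ rId a) :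
    u - v ∈ rId a := by
  obtain ⟨r, rfl⟩ := hu; obtain ⟨s, rfl⟩ := hv
  exact ⟨r - s, by show a * (r - s) = a * r - a * s; rw [mul_sub]⟩

lemma rId_add_mem {R : Type*} [Ring R] {a u v : R} (hu : u ∈ rId a) (hv : v ∈ rId a) :
    u + v ∈ rId a := by
  obtain ⟨r, rfl⟩ := hu; obtain ⟨s, rfl⟩ := hv
  exact ⟨r + s, by show a * (r + s) = a * r + a * s; rw [mul_add]⟩

/-- Antisymmetry of the direct sum order. -/
lemma dsLE_antisymm {R : Type*} [Ring R] {a b : R} (h1 : dsLE a b) (h2 : dsLE b a) :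
    b = a := by
  have hba : rId b ⊆ rId a := by
    rw [← h2.1]
    intro y hy
    have : y + 0 ∈ rId b + rId (a - b) :=
      Set.add_mem_add hy (zero_mem_rId _)
    simpa using this
  have hmem : b - a ∈ rId a ∩ rId (b - a) :=
    ⟨rId_sub_mem (hba (self_mem_rId b)) (self_mem_rId a), self_mem_rId _⟩
  rw [h1.2] at hmem
  have : b - a = 0 := hmem
  linear_combination (norm := abel) this

/-- If `u, v` generate right ideals inside `rId d`, then `s ≤⊕ d` reduces to
the trivial-intersection condition plus the containments. -/
lemma dsLE_of_subsets {R : Type*} [Ring R] {s d : R}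
    (hs : rId s ⊆ rId d) (hds : rId (d - s) ⊆ rId d)
    (hint : rId s ∩ rId (d - s) = {0}) : dsLE s d := by
  constructor
  · apply Set.Subset.antisymm
    · rw [Set.add_subset_iff]
      intro u hu v hv
      exact rId_add_mem (hs hu) (hds hv)
    · rintro y ⟨r, rfl⟩
      have : s * r + (d - s) * r ∈ rId s + rId (d - s) :=
        Set.add_mem_add ⟨r, rfl⟩ ⟨r, rfl⟩
      have he : s * r + (d - s) * r = d * r := by rw [sub_mul]; abel
      rwa [he] at this
  · exact hint

theorem stmt19 {n : ℕ} (a c e : Matrix (Fin n) (Fin n) ℂ)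
    (ha : a.PosSemidef) (he : e * e = e)
    (heR : rId e = rId a ∩ rId c)
    (f : Matrix (Fin n) (Fin n) ℂ) (hf : f = eᴴ)
    (hanotin : ¬ ∃ s : Matrix (Fin n) (Fin n) ℂ, s.PosSemidef ∧ a = e * s * f)
    (x : Matrix (Fin n) (Fin n) ℂ)
    (hx1 : f * x * f = f) (hx2 : x * f * x = x)
    (hx3 : (a * f * x)ᴴ = a * f * x) (hx4 : (a * x * f)ᴴ = a * x * f)
    (C : Set (Matrix (Fin n) (Fin n) ℂ))
    (hC : C = {s ∈ midSet e f | dsLE s a}) :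
    a * x * f ∈ C ∧
    (∀ s ∈ C, dsLE s (a * x * f)) ∧
    {d ∈ C | ∀ c' ∈ C, dsLE d c' → c' = d} = {a * x * f} := by
  subst hC
  have haH : aᴴ = a := ha.isHermitian
  set q : Matrix (Fin n) (Fin n) ℂ := x * f with hqdef
  have hdeq : a * x * f = a * q := mul_assoc a x f
  have hff : f * f = f := by rw [hf, ← conjTranspose_mul, he]
  have hq2 : q * q = q := by rw [hqdef, ← mul_assoc, hx2]
  -- `(a*q)ᴴ = a*q`
  have hdH : (a * q)ᴴ = a * q := by rw [← hdeq]; exact hx4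
  -- `qᴴ * a = a * q`
  have hqa : qᴴ * a = a * q := by
    have : (a * q)ᴴ = qᴴ * aᴴ := conjTranspose_mul a q
    rw [hdH, haH] at this
    exact this.symm
  -- `qᴴ * (a * q) = a * q`
  have hqaq : qᴴ * (a * q) = a * q := by
    rw [← mul_assoc, hqa, mul_assoc, hq2]
  -- `qᴴ * (a - a * q) = 0`
  have hqsub : qᴴ * (a - a * q) = 0 := by
    rw [mul_sub, hqa, hqaq, sub_self]
  -- the intersection condition for `a*q ≤⊕ a`
  have hint_a : rId (a * q) ∩ rId (a - a * q) = {0} := by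
    apply Set.Subset.antisymm
    · rintro y ⟨⟨u, hu⟩, ⟨v, hv⟩⟩
      have h1 : qᴴ * y = y := by
        rw [← hu, ← mul_assoc, hqaq]
      have h2 : qᴴ * y = 0 := by
        rw [← hv, ← mul_assoc, hqsub, zero_mul]
      have : y = 0 := by rw [← h1, h2]
      simpa using this
    · rintro y hy
      simp only [Set.mem_singleton_iff] at hy
      subst hy
      exact ⟨zero_mem_rId _, zero_mem_rId _⟩
  -- `e ∈ rId a`, giving `t` with `a * t = e`
  have heA : e ∈ rId a := by
    have : e ∈ rId e := self_mem_rId e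
    rw [heR] at this
    exact this.1
  obtain ⟨t, ht⟩ := heA
  -- `tᴴ * a = f`
  have htf : tᴴ * a = f := by
    have := congrArg conjTranspose ht
    rw [conjTranspose_mul, haH] at this
    rw [this, hf]
  -- `f * q = f`
  have hfq : f * q = f := by rw [hqdef, ← mul_assoc, hx1]
  -- `tᴴ * (a - a*q) = 0`
  have htsub : tᴴ * (a - a * q) = 0 := by
    rw [mul_sub, htf, ← mul_assoc, htf, hfq, sub_self]
  -- `(a - a*q) * t = 0`, hence `a*q*t = e`
  have hsubH : (a - a * q)ᴴ = a - a * q := by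
    rw [conjTranspose_sub, haH, hdH]
  have hsubt : (a - a * q) * t = 0 := by
    have h := congrArg conjTranspose htsub
    rw [conjTranspose_mul, conjTranspose_conjTranspose, hsubH, conjTranspose_zero] at h
    exact h
  have hdt : (a * q) * t = e := by
    have : a * t - a * q * t = 0 := by rw [← sub_mul]; exact hsubt
    have h2 : a * q * t = a * t := by
      have := sub_eq_zero.mp this
      exact this.symm
    rw [h2]; exact ht
  -- `a * q = e * (xᴴ * a)`, so `rId (a*q) = rId e`
  have hdeR : a * q = e * (xᴴ * a) := by
    have h := congrArg conjTranspose hdH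
    rw [conjTranspose_conjTranspose] at h
    calc a * q = (a * q)ᴴ := hdH.symm
      _ = (a * (x * f))ᴴ := by rw [hqdef]
      _ = (x * f)ᴴ * aᴴ := conjTranspose_mul a (x * f)
      _ = fᴴ * xᴴ * a := by rw [conjTranspose_mul, haH]
      _ = e * (xᴴ * a) := by rw [hf, conjTranspose_conjTranspose, mul_assoc]
  have hdsubE : rId (a * q) ⊆ rId e := rId_subset (xᴴ * a) hdeR
  have hEsubd : rId e ⊆ rId (a * q) := rId_subset t hdt.symm
  -- `e * (a*q) * f = a*q` : membership in `midSet e f`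
  have hed : e * (a * q) = a * q := by
    rw [hdeR, ← mul_assoc, he]
  have hdf : (a * q) * f = a * q := by
    rw [hdeq.symm, mul_assoc (a * x) f f, hff]
  have hdmid : a * q ∈ midSet e f := ⟨a * q, by rw [hed, hdf]⟩
  -- `a*q ≤⊕ a`
  have hdsa : dsLE (a * q) a := by
    apply dsLE_of_subsets
    · exact rId_subset q rfl
    · exact rId_subset (1 - q) (by rw [mul_sub, mul_one])
    · exact hint_a
  -- Part 1 : `a*x*f ∈ C`
  have part1 : a * x * f ∈ {s ∈ midSet e f | dsLE s a} := by
    rw [hdeq]; exact ⟨hdmid, hdsa⟩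
  -- Part 2 : every `s ∈ C` satisfies `s ≤⊕ a*q`
  have part2 : ∀ s ∈ {s ∈ midSet e f | dsLE s a}, dsLE s (a * x * f) := by
    rintro s ⟨⟨r, rfl⟩, hsa⟩
    rw [hdeq]
    set s : Matrix (Fin n) (Fin n) ℂ := e * r * f with hsdef
    have hsq : s * q = s := by
      rw [hsdef, hqdef, mul_assoc (e * r) f (x * f), ← mul_assoc f x f, hx1]
    have hdiff : a * q - s = (a - s) * q := by rw [sub_mul, hsq]
    apply dsLE_of_subsets
    · intro y hy
      exact hEsubd (rId_subset (r * f) (by rw [hsdef, mul_assoc]) hy)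
    · intro y hy
      apply hEsubd
      have hds : a * q - s = e * (xᴴ * a - r * f) := by
        rw [mul_sub, ← hdeR, hsdef, mul_assoc]
      exact rId_subset _ hds hy
    · apply Set.Subset.antisymm
      · rintro y ⟨hy1, ⟨v, hv⟩⟩
        have hv' : (a * q - s) * v = y := hv
        have hy2 : y ∈ rId (a - s) := by
          rw [← hv', hdiff, mul_assoc]
          exact ⟨q * v, rfl⟩
        have : y ∈ rId s ∩ rId (a - s) := ⟨hy1, hy2⟩
        rw [hsa.2] at this
        exact this
      · rintro y hy
        simp only [Set.mem_singleton_iff] at hy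
        subst hy
        exact ⟨zero_mem_rId _, zero_mem_rId _⟩
  refine ⟨part1, part2, ?_⟩
  -- Part 3 : the set of maximal elements is `{a*x*f}`
  apply Set.Subset.antisymm
  · rintro d' ⟨hd'C, hmax⟩
    have h1 : dsLE d' (a * x * f) := part2 d' hd'C
    have h2 : a * x * f = d' := hmax _ part1 h1
    simp [h2]
  · rintro y hy
    simp only [Set.mem_singleton_iff] at hy
    subst hy
    refine ⟨part1, ?_⟩
    intro c' hc' hle
    exact dsLE_antisymm hle (part2 c' hc')
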